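/- arXiv:1512.05533 — 3 statements merged into one kernel-verified Lean document; each statement's English description precedes it below -/
import Mathlib

section
/- The elliptic curve over ℚ defined by Y² = X³ − 27X − 10 is nonsingular (its discriminant is nonzero) and has a rational point with Y ≠ 0 of infinite order; in particular, its group of rational points is infinite. -/
/-- The elliptic curve `Y² = X³ − 27X − 10` over `ℚ`. -/
noncomputable def E6 : WeierstrassCurve ℚ := ⟨0, 0, 0, -27, -10⟩

open WeierstrassCurve WeierstrassCurve.Affine

local notation "v2" => padicValRat 2

lemma E6vadd {q r : ℚ} (hq : q ≠ 0) (hr : r ≠ 0) (h : v2 q < v2 r) :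
    q + r ≠ 0 ∧ v2 (q + r) = v2 q := by
  have hne : v2 q ≠ v2 r := ne_of_lt h
  have hqr : q + r ≠ 0 := by
    intro h0
    have hq' : q = -r := add_eq_zero_iff_eq_neg.mp h0
    rw [hq', padicValRat.neg] at hne
    exact hne rfl
  exact ⟨hqr, by rw [padicValRat.add_eq_min hqr hq hr hne, min_eq_left h.le]⟩

lemma E6v2_odd (n : ℕ) (h : ¬ 2 ∣ n) : v2 (n : ℚ) = 0 := by
  rw [padicValRat.of_nat, padicValNat.eq_zero_of_not_dvd h]
  simp

lemma E6v2_two : v2 (2 : ℚ) = 1 := by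
  simpa using padicValRat.self (p := 2) one_lt_two

/-- Key valuation computation: if `(x, y)` lies on `Y² = X³ − 27X − 10` and
`v₂ x = −2k` with `k ≥ 1`, then `v₂ y = −3k` and the `x`-coordinate of the doubled
point has valuation `−2(k+1)`. -/
lemma E6key {x y : ℚ} {k : ℤ} (hk : 1 ≤ k) (hx : x ≠ 0) (hvx : v2 x = -(2*k))
    (heq : y ^ 2 = x ^ 3 - 27 * x - 10) :
    y ≠ 0 ∧ v2 y = -(3*k) ∧
    ((3*x^2 - 27)/(2*y)) ^ 2 - 2*x ≠ 0 ∧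
    v2 (((3*x^2 - 27)/(2*y))^2 - 2*x) = -(2*(k+1)) := by
  have h27 : v2 (-27 : ℚ) = 0 := by
    rw [padicValRat.neg]
    exact_mod_cast E6v2_odd 27 (by decide)
  have h3 : v2 (3 : ℚ) = 0 := by exact_mod_cast E6v2_odd 3 (by decide)
  have hx3 : v2 (x^3) = -(6*k) := by
    rw [padicValRat.pow x, hvx]; ring
  have h27x : v2 ((-27 : ℚ) * x) = -(2*k) := by
    rw [padicValRat.mul (by norm_num) hx, h27, hvx]; ring
  have h10 : (0:ℤ) ≤ v2 (-10 : ℚ) := by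
    rw [padicValRat.neg]
    exact_mod_cast zero_le_padicValRat_of_nat (p := 2) 10
  have hBC := E6vadd (q := (-27:ℚ)*x) (r := -10) (by simp [hx]) (by norm_num)
    (by rw [h27x]; omega)
  have hA := E6vadd (q := x^3) (r := (-27:ℚ)*x + -10) (pow_ne_zero _ hx) hBC.1
    (by rw [hx3, hBC.2]; omega)
  have hy2 : y^2 ≠ 0 ∧ v2 (y^2) = -(6*k) := by
    have : y^2 = x^3 + ((-27:ℚ)*x + -10) := by rw [heq]; ring
    rw [this]; exact ⟨hA.1, hA.2 ▸ hx3⟩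
  have hy : y ≠ 0 := fun h => hy2.1 (by rw [h]; ring)
  have hvy : v2 y = -(3*k) := by
    have := hy2.2
    rw [padicValRat.pow y] at this
    omega
  have hnum := E6vadd (q := (3:ℚ)*x^2) (r := -27) (by positivity) (by norm_num)
    (by rw [padicValRat.mul (by norm_num) (pow_ne_zero _ hx), h3, padicValRat.pow x, hvx, h27]
        omega)
  have hnum' : (3:ℚ)*x^2 + -27 = 3*x^2 - 27 := by ring
  rw [hnum'] at hnum
  have h2y : v2 (2*y) = 1 + -(3*k) := by
    rw [padicValRat.mul (by norm_num) hy, E6v2_two, hvy]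
  have hL : ((3:ℚ)*x^2 - 27)/(2*y) ≠ 0 := div_ne_zero hnum.1 (by simp [hy])
  have hvL : v2 (((3:ℚ)*x^2 - 27)/(2*y)) = -(k+1) := by
    rw [padicValRat.div hnum.1 (by simp [hy]), hnum.2, h2y]
    have : v2 ((3:ℚ)*x^2) = -(4*k) := by
      rw [padicValRat.mul (by norm_num) (pow_ne_zero _ hx), h3, padicValRat.pow x, hvx]; ring
    rw [this]; ring
  have hfin := E6vadd (q := (((3:ℚ)*x^2 - 27)/(2*y))^2) (r := -(2*x))
    (pow_ne_zero _ hL) (by simp [hx])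
    (by rw [padicValRat.pow _, hvL, padicValRat.neg, padicValRat.mul (by norm_num) hx,
          E6v2_two, hvx]
        omega)
  have hsh : (((3:ℚ)*x^2 - 27)/(2*y))^2 + -(2*x) = ((3*x^2 - 27)/(2*y))^2 - 2*x := by ring
  rw [hsh] at hfin
  refine ⟨hy, hvy, hfin.1, ?_⟩
  rw [hfin.2, padicValRat.pow _, hvL]; ring

lemma E6negY (x y : ℚ) : E6.toAffine.negY x y = -y := by
  simp [WeierstrassCurve.Affine.negY, E6]

lemma E6equation {x y : ℚ} (h : E6.toAffine.Equation x y) :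
    y ^ 2 = x ^ 3 - 27 * x - 10 := by
  have := (E6.toAffine.equation_iff x y).mp h
  simp only [E6] at this
  linarith

/-- Doubling a point whose `x`-coordinate has valuation `−2k` (with `k ≥ 1`) yields a
point whose `x`-coordinate has valuation `−2(k+1)`. -/
lemma E6double {x y : ℚ} (h : E6.toAffine.Nonsingular x y) {k : ℤ} (hk : 1 ≤ k)
    (hx : x ≠ 0) (hvx : v2 x = -(2*k)) :
    ∃ (x' y' : ℚ) (h' : E6.toAffine.Nonsingular x' y'),
      Point.some _ _ h + Point.some _ _ h = Point.some _ _ h' ∧ x' ≠ 0 ∧ v2 x' = -(2*(k+1)) := by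
  have heq := E6equation h.1
  obtain ⟨hy0, hvy, hx'0, hvx'⟩ := E6key hk hx hvx heq
  have hy : y ≠ E6.toAffine.negY x y := by
    rw [E6negY]; intro hc; exact hy0 (by linarith)
  have hslope : E6.toAffine.slope x x y y = (3*x^2 - 27)/(2*y) := by
    rw [slope_of_Y_ne rfl hy, E6negY]
    simp only [E6]
    ring_nf
  have haddX : E6.toAffine.addX x x (E6.toAffine.slope x x y y)
      = ((3*x^2 - 27)/(2*y))^2 - 2*x := by
    rw [hslope]
    simp only [WeierstrassCurve.Affine.addX, E6]
    ring
  exact ⟨_, _, _, Point.add_self_of_Y_ne hy, by rw [haddX]; exact hx'0,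
    by rw [haddX]; exact hvx'⟩

lemma E6hP : E6.toAffine.Nonsingular (-2) 6 := by
  rw [WeierstrassCurve.Affine.nonsingular_iff, WeierstrassCurve.Affine.equation_iff]
  simp [E6]; norm_num

/-- The point `(−2, 6)` on `E6`. -/
noncomputable def E6P : E6.toAffine.Point := Point.some _ _ E6hP

lemma E6v2_8916 : v2 ((89:ℚ)/16) = -4 := by
  have h16 : v2 ((16:ℚ)) = 4 := by
    have : (16:ℚ) = 2^4 := by norm_num
    rw [this, padicValRat.pow _, E6v2_two]; norm_num
  rw [padicValRat.div (by norm_num) (by norm_num), h16]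
  have := E6v2_odd 89 (by decide)
  push_cast at this
  rw [this]; ring

lemma E6base : ∃ (y' : ℚ) (h' : E6.toAffine.Nonsingular (89/16) y'),
    E6P + E6P = Point.some _ _ h' := by
  have hy : (6:ℚ) ≠ E6.toAffine.negY (-2) 6 := by rw [E6negY]; norm_num
  have hs : E6.toAffine.slope (-2) (-2) 6 6 = -5/4 := by
    rw [slope_of_Y_ne rfl hy, E6negY]
    simp only [E6]
    norm_num
  have hX : E6.toAffine.addX (-2) (-2) (E6.toAffine.slope (-2) (-2) 6 6) = 89/16 := by
    rw [hs]
    simp only [WeierstrassCurve.Affine.addX, E6]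
    norm_num
  have hadd := Point.add_self_of_Y_ne (h₁ := E6hP) hy
  refine ⟨_, hX ▸ (nonsingular_add E6hP E6hP fun hxy => hy hxy.right), ?_⟩
  rw [show E6P = Point.some _ _ E6hP from rfl, hadd]
  congr 1

lemma E6chain (k : ℕ) : ∃ (x' y' : ℚ) (h' : E6.toAffine.Nonsingular x' y'),
    (2^(k+1)) • E6P = Point.some _ _ h' ∧ x' ≠ 0 ∧ v2 x' = -(2*((k:ℤ)+2)) := by
  induction k with
  | zero =>
    obtain ⟨y', h', hpp⟩ := E6base
    exact ⟨89/16, y', h', by rw [pow_one, two_nsmul, hpp], by norm_num,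
      by rw [E6v2_8916]; norm_num⟩
  | succ k ih =>
    obtain ⟨x, y, h, hsmul, hx0, hvx⟩ := ih
    obtain ⟨x', y', h', hadd, hx'0, hvx'⟩ := E6double h (k := (k:ℤ)+2) (by omega) hx0 hvx
    refine ⟨x', y', h', ?_, hx'0, by rw [hvx']; push_cast; ring⟩
    have h2 : (2^(k+2) : ℕ) = 2^(k+1) * 2 := by ring
    rw [h2, mul_nsmul, two_nsmul, hsmul, hadd]

lemma E6inj : Function.Injective (fun k : ℕ => (2^(k+1)) • E6P) := by
  intro j k hjk
  obtain ⟨xj, yj, hj, ej, _, vj⟩ := E6chain j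
  obtain ⟨xk, yk, hk', ek, _, vk⟩ := E6chain k
  simp only at hjk
  rw [ej, ek] at hjk
  have hx : xj = xk := by injection hjk
  rw [hx] at vj
  rw [vj] at vk
  omega

lemma E6mod_smul {n : ℕ} (h0 : n • E6P = 0) (a : ℕ) : a • E6P = (a % n) • E6P := by
  conv_lhs => rw [← Nat.div_add_mod a n]
  rw [add_nsmul, mul_nsmul, h0, nsmul_zero, zero_add]

/-- The curve `Y² = X³ − 27X − 10` over `ℚ` is nonsingular (nonzero discriminant)
and carries a rational point with `Y ≠ 0` of infinite order; in particular its
group of rational points is infinite. -/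
theorem E6_nonsingular_and_infinite_order_point :
    E6.Δ ≠ 0 ∧
    (∃ (x y : ℚ) (h : E6.toAffine.Nonsingular x y), y ≠ 0 ∧
      ∀ n : ℕ, n ≠ 0 → n • (WeierstrassCurve.Affine.Point.some x y h) ≠ 0) ∧
    Infinite E6.toAffine.Point := by
  refine ⟨?_, ⟨-2, 6, E6hP, by norm_num, ?_⟩, Infinite.of_injective _ E6inj⟩
  · simp [WeierstrassCurve.Δ, WeierstrassCurve.b₂, WeierstrassCurve.b₄, WeierstrassCurve.b₆,
      WeierstrassCurve.b₈, E6]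
    norm_num
  · intro n hn h0
    have h0' : n • E6P = 0 := h0
    have hmaps : ∀ a ∈ Finset.range (n+1), (2^(a+1)) % n ∈ Finset.range n := by
      intro a _
      exact Finset.mem_range.mpr (Nat.mod_lt _ (Nat.pos_of_ne_zero hn))
    obtain ⟨j, hj, k, hk, hne, heq⟩ :=
      Finset.exists_ne_map_eq_of_card_lt_of_maps_to (by simp) hmaps
    apply hne
    apply E6inj
    simp only
    rw [E6mod_smul h0', E6mod_smul h0' (2^(k+1)), heq]
end

section
/- The polynomial f₀(x) := x¹² − 4x¹¹ − 220x¹⁰ − 88x⁹ + 9768x⁸ + 18480x⁷ − 133760x⁶ − 382272x⁵ + 352880x⁴ + 1664960x³ + 455488x² − 994304x + 217152 has 12 distinct real roots; equivalently, f₀ splits completely over ℝ. -/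
open Polynomial

/-- The totally real `PGL₂(11)`-polynomial
`x¹² − 4x¹¹ − 220x¹⁰ − 88x⁹ + 9768x⁸ + 18480x⁷ − 133760x⁶ − 382272x⁵ + 352880x⁴ + 1664960x³ + 455488x² − 994304x + 217152`. -/
noncomputable def g0 : ℚ[X] :=
  X ^ 12 - 4 * X ^ 11 - 220 * X ^ 10 - 88 * X ^ 9 + 9768 * X ^ 8 + 18480 * X ^ 7
    - 133760 * X ^ 6 - 382272 * X ^ 5 + 352880 * X ^ 4 + 1664960 * X ^ 3
    + 455488 * X ^ 2 - 994304 * X + 217152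

noncomputable def pR : ℝ[X] := g0.map (algebraMap ℚ ℝ)

lemma evalp (x : ℝ) : pR.eval x = x ^ 12 - 4 * x ^ 11 - 220 * x ^ 10 - 88 * x ^ 9
    + 9768 * x ^ 8 + 18480 * x ^ 7 - 133760 * x ^ 6 - 382272 * x ^ 5 + 352880 * x ^ 4
    + 1664960 * x ^ 3 + 455488 * x ^ 2 - 994304 * x + 217152 := by
  simp [pR, g0, eval_map]

lemma deg_pR : pR.natDegree = 12 := by
  have h : pR = X ^ 12 - 4 * X ^ 11 - 220 * X ^ 10 - 88 * X ^ 9 + 9768 * X ^ 8 + 18480 * X ^ 7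
      - 133760 * X ^ 6 - 382272 * X ^ 5 + 352880 * X ^ 4 + 1664960 * X ^ 3
      + 455488 * X ^ 2 - 994304 * X + 217152 := by
    simp [pR, g0]
  rw [h]
  compute_degree!

lemma root_np {p : ℝ[X]} {a b : ℝ} (hab : a < b) (ha : p.eval a < 0) (hb : 0 < p.eval b) :
    ∃ x, a < x ∧ x < b ∧ p.eval x = 0 := by
  obtain ⟨x, hx, hx0⟩ := intermediate_value_Ioo hab.le p.continuous.continuousOn ⟨ha, hb⟩
  exact ⟨x, hx.1, hx.2, hx0⟩

lemma root_pn {p : ℝ[X]} {a b : ℝ} (hab : a < b) (ha : 0 < p.eval a) (hb : p.eval b < 0) :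
    ∃ x, a < x ∧ x < b ∧ p.eval x = 0 := by
  obtain ⟨x, hx, hx0⟩ := intermediate_value_Ioo' hab.le p.continuous.continuousOn ⟨hb, ha⟩
  exact ⟨x, hx.1, hx.2, hx0⟩

/-- `g0` has `12` distinct real roots; equivalently, it splits completely over `ℝ`
with distinct roots. -/
theorem g0_totally_real :
    ((g0.map (algebraMap ℚ ℝ)).roots.toFinset.card = 12) ∧
    (g0.map (algebraMap ℚ ℝ)).Splits := by
  show (pR.roots.toFinset.card = 12) ∧ pR.Splits
  have s0 : 0 < pR.eval (-11 : ℝ) := by rw [evalp]; norm_num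
  have s1 : pR.eval (-10 : ℝ) < 0 := by rw [evalp]; norm_num
  have s2 : 0 < pR.eval (-9/2 : ℝ) := by rw [evalp]; norm_num
  have s3 : pR.eval (-13/4 : ℝ) < 0 := by rw [evalp]; norm_num
  have s4 : 0 < pR.eval (-11/4 : ℝ) := by rw [evalp]; norm_num
  have s5 : pR.eval (-9491/4096 : ℝ) < 0 := by rw [evalp]; norm_num
  have s6 : 0 < pR.eval (-7985/4096 : ℝ) := by rw [evalp]; norm_num
  have s7 : pR.eval (1391/4096 : ℝ) < 0 := by rw [evalp]; norm_num
  have s8 : 0 < pR.eval (385/1024 : ℝ) := by rw [evalp]; norm_num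
  have s9 : pR.eval (9/4 : ℝ) < 0 := by rw [evalp]; norm_num
  have s10 : 0 < pR.eval (9/2 : ℝ) := by rw [evalp]; norm_num
  have s11 : pR.eval (6 : ℝ) < 0 := by rw [evalp]; norm_num
  have s12 : 0 < pR.eval (16 : ℝ) := by rw [evalp]; norm_num
  obtain ⟨x0, hl0, hu0, hr0⟩ := root_pn (show (-11 : ℝ) < (-10 : ℝ) by norm_num) s0 s1
  obtain ⟨x1, hl1, hu1, hr1⟩ := root_np (show (-10 : ℝ) < (-9/2 : ℝ) by norm_num) s1 s2
  obtain ⟨x2, hl2, hu2, hr2⟩ := root_pn (show (-9/2 : ℝ) < (-13/4 : ℝ) by norm_num) s2 s3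
  obtain ⟨x3, hl3, hu3, hr3⟩ := root_np (show (-13/4 : ℝ) < (-11/4 : ℝ) by norm_num) s3 s4
  obtain ⟨x4, hl4, hu4, hr4⟩ := root_pn (show (-11/4 : ℝ) < (-9491/4096 : ℝ) by norm_num) s4 s5
  obtain ⟨x5, hl5, hu5, hr5⟩ := root_np (show (-9491/4096 : ℝ) < (-7985/4096 : ℝ) by norm_num) s5 s6
  obtain ⟨x6, hl6, hu6, hr6⟩ := root_pn (show (-7985/4096 : ℝ) < (1391/4096 : ℝ) by norm_num) s6 s7
  obtain ⟨x7, hl7, hu7, hr7⟩ := root_np (show (1391/4096 : ℝ) < (385/1024 : ℝ) by norm_num) s7 s8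
  obtain ⟨x8, hl8, hu8, hr8⟩ := root_pn (show (385/1024 : ℝ) < (9/4 : ℝ) by norm_num) s8 s9
  obtain ⟨x9, hl9, hu9, hr9⟩ := root_np (show (9/4 : ℝ) < (9/2 : ℝ) by norm_num) s9 s10
  obtain ⟨x10, hl10, hu10, hr10⟩ := root_pn (show (9/2 : ℝ) < (6 : ℝ) by norm_num) s10 s11
  obtain ⟨x11, hl11, hu11, hr11⟩ := root_np (show (6 : ℝ) < (16 : ℝ) by norm_num) s11 s12
  have h01 : x0 < x1 := hu0.trans hl1
  have h12 : x1 < x2 := hu1.trans hl2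
  have h23 : x2 < x3 := hu2.trans hl3
  have h34 : x3 < x4 := hu3.trans hl4
  have h45 : x4 < x5 := hu4.trans hl5
  have h56 : x5 < x6 := hu5.trans hl6
  have h67 : x6 < x7 := hu6.trans hl7
  have h78 : x7 < x8 := hu7.trans hl8
  have h89 : x8 < x9 := hu8.trans hl9
  have h910 : x9 < x10 := hu9.trans hl10
  have h1011 : x10 < x11 := hu10.trans hl11
  have h0 : pR ≠ 0 := by
    intro h
    have := deg_pR
    rw [h] at this
    simp at this
  set l : List ℝ := [x0, x1, x2, x3, x4, x5, x6, x7, x8, x9, x10, x11] with hl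
  have hpw : l.Pairwise (· < ·) := by
    refine List.isChain_iff_pairwise.mp ?_
    simp only [hl, List.isChain_cons_cons, List.isChain_singleton, and_true]
    exact ⟨h01, h12, h23, h34, h45, h56, h67, h78, h89, h910, h1011⟩
  have hnd : l.Nodup := hpw.imp ne_of_lt
  have hmem : ∀ y ∈ l, y ∈ pR.roots.toFinset := by
    intro y hy
    rw [Multiset.mem_toFinset, mem_roots h0]
    simp only [hl, List.mem_cons, List.not_mem_nil, or_false] at hy
    rcases hy with rfl|rfl|rfl|rfl|rfl|rfl|rfl|rfl|rfl|rfl|rfl|rfl <;> assumption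
  have hsub : l.toFinset ⊆ pR.roots.toFinset := fun y hy => hmem y (List.mem_toFinset.mp hy)
  have hc : l.toFinset.card = 12 := by
    rw [List.toFinset_card_of_nodup hnd, hl]
    rfl
  have h12le : (12 : ℕ) ≤ pR.roots.toFinset.card := hc ▸ Finset.card_le_card hsub
  have hle : pR.roots.toFinset.card ≤ Multiset.card pR.roots := pR.roots.toFinset_card_le
  have hle2 : Multiset.card pR.roots ≤ 12 := deg_pR ▸ pR.card_roots'
  have hcard : Multiset.card pR.roots = 12 := le_antisymm hle2 (h12le.trans hle)
  refine ⟨le_antisymm (hle.trans hle2) h12le, ?_⟩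
  rw [splits_iff_card_roots, hcard, deg_pR]
end

section
/- The polynomial x¹³ − 6x¹² − 4542x¹¹ − 226075x¹⁰ + 8156061x⁹ + 770464590x⁸ + 11462215447x⁷ − 970419905164x⁶ − 33706100049495x⁵ + 18705429494567x⁴ + 29408002566579439x³ + 237585722590314749x² − 2291157493210202812x − 11381632704121436976 is irreducible over ℚ. -/
open Polynomial

set_option maxHeartbeats 2000000

noncomputable section PSL33Aux

private instance fact5 : Fact (Nat.Prime 5) := ⟨by norm_num⟩

private def fz : ℤ[X] := (-11381632704121436976) + (-2291157493210202812) * X + 237585722590314749 * X ^ 2 + 29408002566579439 * X ^ 3 + 18705429494567 * X ^ 4 + (-33706100049495) * X ^ 5 + (-970419905164) * X ^ 6 + 11462215447 * X ^ 7 + 770464590 * X ^ 8 + 8156061 * X ^ 9 + (-226075) * X ^ 10 + (-4542) * X ^ 11 + (-6) * X ^ 12 + X ^ 13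

private def h1z : ℤ[X] := X ^ 5

private def h2z : ℤ[X] := 3 + 2 * X + 4 * X ^ 2 + X ^ 3 + 2 * X ^ 4 + X ^ 7 + 2 * X ^ 11

private def h3z : ℤ[X] := 1 + 2 * X + 2 * X ^ 2 + X ^ 3 + X ^ 4 + 4 * X ^ 5 + 2 * X ^ 6 + X ^ 7 + X ^ 9 + 4 * X ^ 10 + 4 * X ^ 11 + 3 * X ^ 12

private def h4z : ℤ[X] := 2 + 3 * X + 4 * X ^ 2 + X ^ 3 + 4 * X ^ 4 + 3 * X ^ 7 + 3 * X ^ 8 + 4 * X ^ 9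

private def h5z : ℤ[X] := 2 + 4 * X + 3 * X ^ 2 + X ^ 3 + 4 * X ^ 4 + 4 * X ^ 6 + 2 * X ^ 7 + 2 * X ^ 8 + 4 * X ^ 9 + 2 * X ^ 11 + X ^ 12

private def h6z : ℤ[X] := 1 + 2 * X + 2 * X ^ 2 + X ^ 3 + X ^ 4 + X ^ 5 + 3 * X ^ 6 + 3 * X ^ 7 + 2 * X ^ 8 + X ^ 9 + 3 * X ^ 10 + 2 * X ^ 11 + X ^ 12

private def t2z : ℤ[X] := 3 + X + 4 * X ^ 2 + 4 * X ^ 3 + 4 * X ^ 5 + 4 * X ^ 6 + 4 * X ^ 7 + 3 * X ^ 10 + X ^ 11 + X ^ 12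

private def c2z : ℤ[X] := 6828979622472862185 + 3651021036750409082 * X + 9420986228385001293 * X ^ 2 + 10873070211807301217 * X ^ 3 + 1636964592724897822 * X ^ 4 + 8891727665745765014 * X ^ 5 + 10914698114940405623 * X ^ 6 + 10748175767536155738 * X ^ 7 + 1619358752903888783 * X ^ 8 + (-213609177461945785) * X ^ 9 + 6805465211168402980 * X ^ 10 + 3651033812999928575 * X ^ 11 + 2592034337951987401 * X ^ 12 + 393070319133994545 * X ^ 13 + (-53409978081740818) * X ^ 14 + (-5865118561900761) * X ^ 15 + 3582379713728 * X ^ 16 + 6928426846162 * X ^ 17 + 191329262827 * X ^ 18 + (-2451429640) * X ^ 19 + (-155588486) * X ^ 20 + (-1583272) * X ^ 21 + 46127 * X ^ 22 + 909 * X ^ 23 + X ^ 24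

private def t3z : ℤ[X] := 3 + X + 2 * X ^ 2 + 3 * X ^ 3 + 3 * X ^ 4 + 3 * X ^ 5 + 2 * X ^ 6 + 4 * X ^ 7 + 2 * X ^ 8 + 2 * X ^ 9 + 4 * X ^ 10 + 2 * X ^ 12 + 2 * X ^ 14 + 4 * X ^ 15 + 2 * X ^ 18 + X ^ 19 + 4 * X ^ 20 + X ^ 21 + 3 * X ^ 22 + 3 * X ^ 23 + 2 * X ^ 24 + 2 * X ^ 26 + 4 * X ^ 27 + 4 * X ^ 28 + X ^ 30 + 2 * X ^ 31 + 3 * X ^ 32 + 3 * X ^ 33 + 3 * X ^ 35 + 3 * X ^ 36 + 3 * X ^ 37 + X ^ 40 + 2 * X ^ 41 + 2 * X ^ 42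

private def c3z : ℤ[X] := 6828979622472862186 + 3651021036750409082 * X + 4868333146736426503 * X ^ 2 + 7680280673698932697 * X ^ 3 + 8102747005591845345 * X ^ 4 + 8049375966392294031 * X ^ 5 + 5767151183780715135 * X ^ 6 + 9861575371876069015 * X ^ 7 + 6272909371456236656 * X ^ 8 + 5267293877744175662 * X ^ 9 + 9903221786045005552 * X ^ 10 + 1726127597510949310 * X ^ 11 + 4350841166081484733 * X ^ 12 + 892943366783042569 * X ^ 13 + 4457617689394121643 * X ^ 14 + 10010033307398218690 * X ^ 15 + 1737884994796658949 * X ^ 16 + (-201818306139901715) * X ^ 17 + 4529119584971935447 * X ^ 18 + 3192788051613473888 * X ^ 19 + 9468530725643062748 * X ^ 20 + 4049972961595534083 * X ^ 21 + 7091253450879669475 * X ^ 22 + 8132640312562145976 * X ^ 23 + 5778906708545133635 * X ^ 24 + 756290175483362825 * X ^ 25 + 4439970282770113228 * X ^ 26 + 10010015144713785224 * X ^ 27 + 10843211189659005355 * X ^ 28 + 1631108273123341568 * X ^ 29 + 2062724459353878820 * X ^ 30 + 4987356691281766226 * X ^ 31 + 7697937863630343454 * X ^ 32 + 8102785965477495580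 * X ^ 33 + 1220376887117461245 * X ^ 34 + 6668782636637533111 * X ^ 35 + 8186031769502534211 * X ^ 36 + 8061132071116304784 * X ^ 37 + 1214519062005163369 * X ^ 38 + (-160206883287032833) * X ^ 39 + 2258690732343847461 * X ^ 40 + 5010894162477810355 * X ^ 41 + 5421619733444480319 * X ^ 42 + 815547682647112786 * X ^ 43 + (-106801238493155519) * X ^ 44 + (-11763942445456446) * X ^ 45 + 6194347447737 * X ^ 46 + 13868315677148 * X ^ 47 + 383428985697 * X ^ 48 + (-4894703224) * X ^ 49 + (-311403046) * X ^ 50 + (-3171086) * X ^ 51 + 92248 * X ^ 52 + 1819 * X ^ 53 + 2 * X ^ 54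

private def t4z : ℤ[X] := 1 + X + X ^ 2 + 2 * X ^ 3 + 2 * X ^ 5 + 2 * X ^ 6 + 4 * X ^ 7 + 4 * X ^ 8 + 4 * X ^ 9 + X ^ 10 + 4 * X ^ 11 + 4 * X ^ 13 + X ^ 15 + X ^ 17 + X ^ 18 + 4 * X ^ 19 + 3 * X ^ 20 + X ^ 22 + X ^ 23 + 3 * X ^ 24 + 2 * X ^ 26 + X ^ 27 + X ^ 28 + 3 * X ^ 29 + X ^ 30 + 4 * X ^ 31 + 4 * X ^ 32 + 2 * X ^ 33 + 2 * X ^ 35 + 3 * X ^ 36 + 2 * X ^ 37 + 2 * X ^ 38 + 4 * X ^ 40 + X ^ 41 + X ^ 42 + 4 * X ^ 45 + 3 * X ^ 46 + 3 * X ^ 47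

private def c4z : ℤ[X] := 2276326540824287395 + 2734558039466327957 * X + 2687040894948265007 * X ^ 2 + 4957485835259236515 * X ^ 3 + 863060511166803373 * X ^ 4 + 4451740192233243989 * X ^ 5 + 5457356072124116158 * X ^ 6 + 9926734322384854821 * X ^ 7 + 10831448341880018978 * X ^ 8 + 10736393282314425274 * X ^ 9 + 3895663550794591172 * X ^ 10 + 9349941587768290078 * X ^ 11 + 1761894832113139278 * X ^ 12 + 8909368756690969292 * X ^ 13 + 1809423583163744712 * X ^ 14 + 2086250506175057951 * X ^ 15 + 434732245760221008 * X ^ 16 + 2228795205383395992 * X ^ 17 + 2728703394502846037 * X ^ 18 + 9516017552053334025 * X ^ 19 + 8608513604053407143 * X ^ 20 + 1178740769722446220 * X ^ 21 + 2110251703051981676 * X ^ 22 + 2716905208732863519 * X ^ 23 + 7239709910009093018 * X ^ 24 + 1321316748444205891 * X ^ 25 + 4404216879421618658 * X ^ 26 + 3175147729207244906 * X ^ 27 + 2639519462007738770 * X ^ 28 + 7227951191017063796 * X ^ 29 + 3597615389352778789 * X ^ 30 + 9415114362192755622 * X ^ 31 + 10873073599645509520 * X ^ 32 + 6189624605087729852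 * X ^ 33 + 702884691216185220 * X ^ 34 + 4434084747237746978 * X ^ 35 + 7733691606317773545 * X ^ 36 + 5832333544826430454 * X ^ 37 + 5314815693799066433 * X ^ 38 + 803776802916533113 * X ^ 39 + 8998510927208980205 * X ^ 40 + 4097502463707482892 * X ^ 41 + 2544496039326277119 * X ^ 42 + 387201815493274889 * X ^ 43 + (-53413326257437962) * X ^ 44 + 9099447781680099156 * X ^ 45 + 8661909393199748753 * X ^ 46 + 8013612466457781381 * X ^ 47 + 1208616851493927808 * X ^ 48 + (-160211201890791204) * X ^ 49 + (-17629060073148075) * X ^ 50 + 9776736674724 * X ^ 51 + 20796742246566 * X ^ 52 + 574758243067 * X ^ 53 + (-7346132870) * X ^ 54 + (-466991530) * X ^ 55 + (-4754358) * X ^ 56 + 138375 * X ^ 57 + 2728 * X ^ 58 + 3 * X ^ 59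

private def t5z : ℤ[X] := 4 * X + 2 * X ^ 3 + X ^ 4 + X ^ 5 + 4 * X ^ 6 + 2 * X ^ 8 + X ^ 10 + X ^ 11 + 2 * X ^ 12 + 4 * X ^ 13 + 4 * X ^ 14 + X ^ 15 + 4 * X ^ 16 + 2 * X ^ 17 + 3 * X ^ 20 + 4 * X ^ 21 + X ^ 22 + X ^ 23 + 4 * X ^ 26 + 4 * X ^ 27 + 2 * X ^ 30 + 4 * X ^ 31 + 4 * X ^ 32

private def c5z : ℤ[X] := 9105306163297149580 * X + 1832925994568162249 * X ^ 2 + 4362584503576322991 * X ^ 3 + 3169263136055104968 * X ^ 4 + 2639508786086606405 * X ^ 5 + 9504284281274535013 * X ^ 6 + 1779520543700909716 * X ^ 7 + 4356712635247355630 * X ^ 8 + 892939982916518952 * X ^ 9 + 2181284218157145747 * X ^ 10 + 2722821994803268745 * X ^ 11 + 4963360727486883909 * X ^ 12 + 9968383888664465613 * X ^ 13 + 10837312914779977342 * X ^ 14 + 3907423751836312154 * X ^ 15 + 9349942134637863831 * X ^ 16 + 6314534239530113837 * X ^ 17 + 720525204956473873 * X ^ 18 + (-118536695699933130) * X ^ 19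 + 6817208965179024599 * X ^ 20 + 10480020326226133739 * X ^ 21 + 3966715357698956454 * X ^ 22 + 2526845038691883114 * X ^ 23 + 387176723610312754 * X ^ 24 + (-53393486029606626) * X ^ 25 + 9099448368826836822 * X ^ 26 + 10938235927458111743 * X ^ 27 + 1642864342167852092 * X ^ 28 + (-213594788955242714) * X ^ 29 + 4529111712798790374 * X ^ 30 + 10021781160962134103 * X ^ 31 + 10843225610043567298 * X ^ 32 + 1631094982635476576 * X ^ 33 + (-213602472083456298) * X ^ 34 + (-23527884579735926) * X ^ 35 + 12388698062019 * X ^ 36 + 27736631262042 * X ^ 37 + 766857969576 * X ^ 38 + (-9789406450) * X ^ 39 + (-622806091) * X ^ 40 + (-6342172) * X ^ 41 + 184496 * X ^ 42 + 3638 * X ^ 43 + 4 * X ^ 44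

private def t6z : ℤ[X] := 4 + 4 * X + 3 * X ^ 3 + 4 * X ^ 4 + 4 * X ^ 5 + 2 * X ^ 6 + 4 * X ^ 7 + 4 * X ^ 8 + 2 * X ^ 9 + X ^ 10 + X ^ 11 + 4 * X ^ 13 + 2 * X ^ 14 + 4 * X ^ 15 + X ^ 16 + 3 * X ^ 17 + X ^ 18 + 2 * X ^ 19 + 2 * X ^ 20 + 2 * X ^ 21 + X ^ 22 + 3 * X ^ 27 + 3 * X ^ 28 + X ^ 29 + 3 * X ^ 30 + 2 * X ^ 31 + 4 * X ^ 32 + X ^ 35 + 4 * X ^ 36 + 2 * X ^ 37 + 4 * X ^ 38 + X ^ 41 + X ^ 42 + 3 * X ^ 45 + X ^ 46 + X ^ 47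

private def c6z : ℤ[X] := 9105306163297149581 + 10938232157865311830 * X + 1642857416495910450 * X ^ 2 + 6615384642347346835 * X ^ 3 + 10456459292826412063 * X ^ 4 + 10795692724847566924 * X ^ 5 + 6177893437820501304 * X ^ 6 + 9808163724364170388 * X ^ 7 + 10819676716306212393 * X ^ 8 + 6183759879283343985 * X ^ 9 + 2979214810143345813 * X ^ 10 + 2615996633177420164 * X ^ 11 + 398963532010717817 * X ^ 12 + 9051927672102289593 * X ^ 13 + 6379707983909166710 * X ^ 14 + 9831703961021830001 * X ^ 15 + 3990698774399362494 * X ^ 16 + 7085364569149433459 * X ^ 17 + 3579996970437710414 * X ^ 18 + 4862450840499828829 * X ^ 19 + 5403977735665391517 * X ^ 20 + 5368196478480239692 * X ^ 21 + 3086008715219240528 * X ^ 22 + 351433846967541733 * X ^ 23 + (-59274158230344693) * X ^ 24 + (-5875214833302225) * X ^ 25 + 10124778259067 * X ^ 26 + 6828986746966267481 * X ^ 27 + 8203674307586678407 * X ^ 28 + 3508469600592420225 * X ^ 29 + 7127014885863503141 * X ^ 30 + 5862174408257450161 * X ^ 31 + 9873345126916105959 * X ^ 32 + 1720263968818163479 *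 X ^ 33 + (-201835685761956585) * X ^ 34 + 2252813067003628725 * X ^ 35 + 9563536759527941906 * X ^ 36 + 6338089277710495574 * X ^ 37 + 9825819753282929375 * X ^ 38 + 1714361552910069999 * X ^ 39 + (-201840002841966869) * X ^ 40 + 2252819815556814953 * X ^ 41 + 2734557331606415824 * X ^ 42 + 410741697848117634 * X ^ 43 + (-53397973898343765) * X ^ 44 + 6823094271389209557 * X ^ 45 + 3651024036265067740 * X ^ 46 + 2592013541209699256 * X ^ 47 + 393069744375750574 * X ^ 48 + (-53409970735607950) * X ^ 49 + (-5865118094909230) * X ^ 50 + 3582384468086 * X ^ 51 + 6928426707787 * X ^ 52 + 191329260099 * X ^ 53 + (-2451429643) * X ^ 54 + (-155588485) * X ^ 55 + (-1583272) * X ^ 56 + 46127 * X ^ 57 + 909 * X ^ 58 + X ^ 59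

private def a1z : ℤ[X] := 4 + 4 * X + X ^ 4

private def b1z : ℤ[X] := 3 + 3 * X + 2 * X ^ 2 + 3 * X ^ 3 + 4 * X ^ 4 + X ^ 5 + 3 * X ^ 6 + 3 * X ^ 7 + 3 * X ^ 8 + X ^ 9 + 2 * X ^ 10 + X ^ 11 + 4 * X ^ 12

private def e1z : ℤ[X] := (-9105306163297149581) + (-10938232157865311831) * X + (-1642857416495910451) * X ^ 2 + 213594980125515350 * X ^ 3 + (-2252785174427428191) * X ^ 4 + (-458243499178484505) * X ^ 5 + 47489403302099223 * X ^ 6 + 5880833347164114 * X ^ 7 + 3750872042943 * X ^ 8 + (-6740597113378) * X ^ 9 + (-194077637044) * X ^ 10 + 2292258596 * X ^ 11 + 154089280 * X ^ 12 + 1631208 * X ^ 13 + (-45214) * X ^ 14 + (-908) * X ^ 15 + (-1) * X ^ 16 + X ^ 17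

private def a2z : ℤ[X] := 3 + 2 * X + 2 * X ^ 2 + 2 * X ^ 3 + 3 * X ^ 4 + X ^ 5 + 2 * X ^ 6 + 3 * X ^ 8 + 4 * X ^ 10

private def b2z : ℤ[X] := 3 + 4 * X ^ 2 + 3 * X ^ 3 + 2 * X ^ 5 + 3 * X ^ 6 + 2 * X ^ 7 + X ^ 8 + 4 * X ^ 9 + 2 * X ^ 11 + 3 * X ^ 12

private def e2z : ℤ[X] := (-6828979622472862184) + (-5927347577574696477) * X + (-5326564645378467061) * X ^ 2 + (-5356436988356582349) * X ^ 3 + (-7638633906436488890) * X ^ 4 + (-3544236288175883273) * X ^ 5 + (-4856576528229959793) * X ^ 6 + (-851307432784925275) * X ^ 7 + (-6728066375226540585) * X ^ 8 + (-1362948160743617103) * X ^ 9 + (-8962754566146917104) * X ^ 10 + (-1815294862363531037) * X ^ 11 + 190079415919878495 * X ^ 12 + 23506183137014345 * X ^ 13 + 14382401332144 * X ^ 14 + (-26957999495844) * X ^ 15 + (-775873736716) * X ^ 16 + 9174664178 * X ^ 17 + 616236026 * X ^ 18 + 6522125 * X ^ 19 + (-180862) * X ^ 20 + (-3633) * X ^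 21 + (-4) * X ^ 22 + 2 * X ^ 23

private def a3z : ℤ[X] := 4 + 2 * X + 3 * X ^ 3 + 4 * X ^ 4 + 4 * X ^ 7 + X ^ 10 + X ^ 11

private def b3z : ℤ[X] := 3 * X ^ 2 + X ^ 3 + 2 * X ^ 4 + 2 * X ^ 7 + 2 * X ^ 8 + 3 * X ^ 9 + 4 * X ^ 10 + X ^ 11 + 3 * X ^ 12

private def e3z : ℤ[X] := (-9105306163297149581) + (-6385579076216737040) * X + (-726394419211829325) * X ^ 2 + (-6710418931383472734) * X ^ 3 + (-10468222493853043837) * X ^ 4 + (-1690394043722215168) * X ^ 5 + 207699120836255535 * X ^ 6 + (-9081768916984378994) * X ^ 7 + (-1832931248683338439) * X ^ 8 + 190041031254979794 * X ^ 9 + (-2252800908226537139) * X ^ 10 + (-2734543065490775252) * X ^ 11 + (-410741318382753714) * X ^ 12 + 53397968701843917 * X ^ 13 + 5885350768803584 * X ^ 14 + (-2999517742943) * X ^ 15 + (-6935297466082) * X ^ 16 + (-191791718797) * X ^ 17 + 2446532379 * X ^ 18 + 155724132 * X ^ 19 + 1586005 * X ^ 20 + (-46117) * X ^ 21 + (-904)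 * X ^ 22 + 2 * X ^ 23 + 2 * X ^ 24

private def a4z : ℤ[X] := 3 * X + X ^ 3 + 4 * X ^ 5 + X ^ 6 + X ^ 7

private def b4z : ℤ[X] := 3 + X + X ^ 2 + 4 * X ^ 4 + 3 * X ^ 5 + 2 * X ^ 6 + 4 * X ^ 7 + 2 * X ^ 8 + 3 * X ^ 9 + 3 * X ^ 10 + X ^ 11

private def e4z : ℤ[X] := 1 + (-6828979622472862184) * X + (-1374694495926121684) * X ^ 2 + (-2133775107270098544) * X ^ 3 + (-440586697102092894) * X ^ 4 + (-9057777795521389887) * X ^ 5 + (-4103391158539163448) * X ^ 6 + (-2544486302560120336) * X ^ 7 + (-387194686413394682) * X ^ 8 + 53413515753272224 * X ^ 9 + 5858379016511939 * X ^ 10 + (-3776316077833) * X ^ 11 + (-6926132590078) * X ^ 12 + (-191175211480) * X ^ 13 + 2453059957 * X ^ 14 + 155543275 * X ^ 15 + 1582370 * X ^ 16 + (-46123) * X ^ 17 + (-904) * X ^ 18 + 2 * X ^ 19 + X ^ 20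

private def a5z : ℤ[X] := 4 + 4 * X + 3 * X ^ 2 + X ^ 3 + 2 * X ^ 4 + 3 * X ^ 5 + X ^ 6 + 4 * X ^ 7 + X ^ 8 + 2 * X ^ 9 + X ^ 10 + 4 * X ^ 11

private def b5z : ℤ[X] := X + X ^ 2 + 2 * X ^ 3 + 4 * X ^ 4 + X ^ 6 + 4 * X ^ 7 + 3 * X ^ 8 + 4 * X ^ 9 + X ^ 11 + X ^ 12

private def e5z : ℤ[X] := (-9105306163297149581) + (-10938232157865311830) * X + (-8471837038968772635) * X ^ 2 + (-3437426056624893730) * X ^ 3 + (-4844791780339567295) * X ^ 4 + (-7680292674235376635) * X ^ 5 + (-3550121665159234278) * X ^ 6 + (-9409240277098652070) * X ^ 7 + (-4044090420848450164) * X ^ 8 + (-4814936847471125959) * X ^ 9 + (-3121762859518069025) * X ^ 10 + (-9462614126774417450) * X ^ 11 + (-1773669059714582198) * X ^ 12 + 195950145959367819 * X ^ 13 + 23516475943829211 * X ^ 14 + 7837865932210 * X ^ 15 + (-27154218564618) * X ^ 16 + (-773733845760) * X ^ 17 + 9327078857 * X ^ 18 + 617911544 * X ^ 19 + 6477820 *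 X ^ 20 + (-181769) * X ^ 21 + (-3634) * X ^ 22 + (-4) * X ^ 23 + X ^ 24

private def a6z : ℤ[X] := 4 * X + 4 * X ^ 2 + 3 * X ^ 3 + 2 * X ^ 4 + 2 * X ^ 5 + 2 * X ^ 6 + 4 * X ^ 7 + X ^ 8 + 4 * X ^ 9 + 4 * X ^ 11

private def b6z : ℤ[X] := 1 + 3 * X + 2 * X ^ 2 + X ^ 3 + 2 * X ^ 4 + 2 * X ^ 8 + 2 * X ^ 9 + 2 * X ^ 10 + 2 * X ^ 11 + X ^ 12

private def e6z : ℤ[X] := (-9105306163297149580) * X + (-10938232157865311829) * X ^ 2 + (-8471837038968772634) * X ^ 3 + (-5713752597449181125) * X ^ 4 + (-5303023278981607859) * X ^ 5 + (-5356448988893026292) * X ^ 6 + (-9914988188476740014) * X ^ 7 + (-4002468553984075609) * X ^ 8 + (-9361712455574327604) * X ^ 9 + (-1761888828932793991) * X ^ 10 + (-8909354885922459176) * X ^ 11 + (-1809423199579220283) * X ^ 12 + 190076029756108583 * X ^ 13 + 23499252570370386 * X ^ 14 + 14190919656463 * X ^ 15 + (-26955549741716) * X ^ 16 + (-775718103922)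 * X ^ 17 + 9176248360 * X ^ 18 + 616189903 * X ^ 19 + 6521218 * X ^ 20 + (-180862) * X ^ 21 + (-3631) * X ^ 22 + (-4) * X ^ 23 + X ^ 24

private lemma exidZ2 : expand ℤ 5 h1z = h2z + t2z * fz + 5 * c2z := by
  have h1 : expand ℤ 5 h1z = (X ^ 25 : ℤ[X]) := by
    unfold h1z
    simp only [map_add, map_mul, map_pow, map_ofNat, Polynomial.expand_X, map_one]
    ring
  rw [h1]; unfold h2z t2z c2z fz; ring

private lemma exidZ3 : expand ℤ 5 h2z = h3z + t3z * fz + 5 * c3z := by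
  have h1 : expand ℤ 5 h2z = (3 + 2 * X ^ 5 + 4 * X ^ 10 + X ^ 15 + 2 * X ^ 20 + X ^ 35 + 2 * X ^ 55 : ℤ[X]) := by
    unfold h2z
    simp only [map_add, map_mul, map_pow, map_ofNat, Polynomial.expand_X, map_one]
    ring
  rw [h1]; unfold h3z t3z c3z fz; ring

private lemma exidZ4 : expand ℤ 5 h3z = h4z + t4z * fz + 5 * c4z := by
  have h1 : expand ℤ 5 h3z = (1 + 2 * X ^ 5 + 2 * X ^ 10 + X ^ 15 + X ^ 20 + 4 * X ^ 25 + 2 * X ^ 30 + X ^ 35 + X ^ 45 + 4 * X ^ 50 + 4 * X ^ 55 + 3 * X ^ 60 : ℤ[X]) := by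
    unfold h3z
    simp only [map_add, map_mul, map_pow, map_ofNat, Polynomial.expand_X, map_one]
    ring
  rw [h1]; unfold h4z t4z c4z fz; ring

private lemma exidZ5 : expand ℤ 5 h4z = h5z + t5z * fz + 5 * c5z := by
  have h1 : expand ℤ 5 h4z = (2 + 3 * X ^ 5 + 4 * X ^ 10 + X ^ 15 + 4 * X ^ 20 + 3 * X ^ 35 + 3 * X ^ 40 + 4 * X ^ 45 : ℤ[X]) := by
    unfold h4z
    simp only [map_add, map_mul, map_pow, map_ofNat, Polynomial.expand_X, map_one]
    ring
  rw [h1]; unfold h5z t5z c5z fz; ring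

private lemma exidZ6 : expand ℤ 5 h5z = h6z + t6z * fz + 5 * c6z := by
  have h1 : expand ℤ 5 h5z = (2 + 4 * X ^ 5 + 3 * X ^ 10 + X ^ 15 + 4 * X ^ 20 + 4 * X ^ 30 + 2 * X ^ 35 + 2 * X ^ 40 + 4 * X ^ 45 + 2 * X ^ 55 + X ^ 60 : ℤ[X]) := by
    unfold h5z
    simp only [map_add, map_mul, map_pow, map_ofNat, Polynomial.expand_X, map_one]
    ring
  rw [h1]; unfold h6z t6z c6z fz; ring

private lemma bezZ1 : a1z * fz + b1z * (h1z - X) = 1 + 5 * e1z := by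
  unfold a1z b1z e1z h1z fz; ring

private lemma bezZ2 : a2z * fz + b2z * (h2z - X) = 1 + 5 * e2z := by
  unfold a2z b2z e2z h2z fz; ring

private lemma bezZ3 : a3z * fz + b3z * (h3z - X) = 1 + 5 * e3z := by
  unfold a3z b3z e3z h3z fz; ring

private lemma bezZ4 : a4z * fz + b4z * (h4z - X) = 1 + 5 * e4z := by
  unfold a4z b4z e4z h4z fz; ring

private lemma bezZ5 : a5z * fz + b5z * (h5z - X) = 1 + 5 * e5z := by
  unfold a5z b5z e5z h5z fz; ring

private lemma bezZ6 : a6z * fz + b6z * (h6z - X) = 1 + 5 * e6z := by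
  unfold a6z b6z e6z h6z fz; ring


private abbrev R5 : Type := ZMod 5
private def phi : ℤ →+* R5 := Int.castRingHom (ZMod 5)
private def M (p : ℤ[X]) : (R5)[X] := p.map phi
private def Fm : (R5)[X] := M fz

private lemma M_five_mul (c : ℤ[X]) : M (5 * c) = 0 := by
  unfold M
  rw [Polynomial.map_mul]
  have h1 : ((5 : ℤ[X]).map phi) = (5 : (R5)[X]) := by
    simp [Polynomial.map_ofNat]
  rw [h1]
  have h5 : (5 : (R5)[X]) = 0 := by
    have h2 : ((5 : ℕ) : (R5)[X]) = (5 : (R5)[X]) := by norm_cast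
    rw [← h2]
    have h3 : ((5 : ℕ) : R5) = 0 := by decide
    rw [← Polynomial.C_eq_natCast, h3, map_zero]
  rw [h5, zero_mul]

private lemma M_eq_of_idZ {A B C : ℤ[X]} (h : A = B + 5 * C) : M A = M B := by
  have h2 := congrArg M h
  rwa [show M (B + 5 * C) = M B + M (5 * C) from Polynomial.map_add _, M_five_mul,
    add_zero] at h2

/-- `g ^ 5 = expand 5 g` over `ZMod 5` (Frobenius). -/
private lemma pow5_eq_expand (g : (R5)[X]) : g ^ 5 = expand (ZMod 5) 5 g := by
  haveI : ExpChar (ZMod 5) 5 := ExpChar.prime (by norm_num)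
  have h := Polynomial.map_frobenius_expand (p := 5) (f := g)
  rw [ZMod.frobenius_zmod, Polynomial.map_id] at h
  exact h.symm

private lemma M_expand (p : ℤ[X]) : M (expand ℤ 5 p) = expand (ZMod 5) 5 (M p) := by
  unfold M
  exact Polynomial.map_expand

/-- The chain step: `Fm ∣ (M h_{d-1}) ^ 5 - M h_d`. -/
private lemma chain_step {hp hn t c : ℤ[X]} (h : expand ℤ 5 hp = hn + t * fz + 5 * c) :
    Fm ∣ (M hp) ^ 5 - M hn := by
  have h2 : M (expand ℤ 5 hp) = M (hn + t * fz) := M_eq_of_idZ h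
  rw [M_expand, ← pow5_eq_expand] at h2
  have h3 : M (hn + t * fz) = M hn + M t * Fm := by
    unfold Fm M
    rw [Polynomial.map_add, Polynomial.map_mul]
  rw [h3] at h2
  exact ⟨M t, by rw [h2]; ring⟩

private lemma dvd_pow_aux {d : ℕ} {hp hn : (R5)[X]}
    (h1 : Fm ∣ (X : (R5)[X]) ^ (5 ^ d) - hp) (h2 : Fm ∣ hp ^ 5 - hn) :
    Fm ∣ (X : (R5)[X]) ^ (5 ^ (d + 1)) - hn := by
  have h3 : Fm ∣ ((X : (R5)[X]) ^ (5 ^ d)) ^ 5 - hp ^ 5 :=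
    dvd_trans h1 (sub_dvd_pow_sub_pow _ _ 5)
  have h4 := dvd_add h3 h2
  have h5 : ((X : (R5)[X]) ^ (5 ^ d)) ^ 5 - hp ^ 5 + (hp ^ 5 - hn)
      = (X : (R5)[X]) ^ (5 ^ (d + 1)) - hn := by
    rw [← pow_mul, pow_succ]; ring
  rwa [h5] at h4

private lemma dvd1 : Fm ∣ (X : (R5)[X]) ^ (5 ^ 1) - M h1z := by
  have h : (X : (R5)[X]) ^ (5 ^ 1) - M h1z = 0 := by
    unfold M h1z
    rw [Polynomial.map_pow, Polynomial.map_X]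
    norm_num
  rw [h]
  exact dvd_zero _

private lemma dvd2 : Fm ∣ (X : (R5)[X]) ^ (5 ^ 2) - M h2z := dvd_pow_aux dvd1 (chain_step exidZ2)
set_option maxRecDepth 10000 in
private lemma dvd3 : Fm ∣ (X : (R5)[X]) ^ (5 ^ 3) - M h3z := dvd_pow_aux dvd2 (chain_step exidZ3)
set_option maxRecDepth 10000 in
private lemma dvd4 : Fm ∣ (X : (R5)[X]) ^ (5 ^ 4) - M h4z := dvd_pow_aux dvd3 (chain_step exidZ4)
private lemma dvd5 : Fm ∣ (X : (R5)[X]) ^ (5 ^ 5) - M h5z := by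
  have h := dvd_pow_aux (d := 4) dvd4 (chain_step exidZ5)
  rwa [show 4 + 1 = 5 from rfl] at h
private lemma dvd6 : Fm ∣ (X : (R5)[X]) ^ (5 ^ 6) - M h6z := by
  have h := dvd_pow_aux (d := 5) dvd5 (chain_step exidZ6)
  rwa [show 5 + 1 = 6 from rfl] at h


private lemma cop_aux {a b h e : ℤ[X]} {d : ℕ}
    (hbez : a * fz + b * (h - X) = 1 + 5 * e)
    (hdvd : Fm ∣ (X : (R5)[X]) ^ (5 ^ d) - M h) :
    IsCoprime Fm ((X : (R5)[X]) ^ (5 ^ d) - X) := by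
  have h1 : M (a * fz + b * (h - X)) = M 1 := M_eq_of_idZ hbez
  have h2 : M a * Fm + M b * (M h - X) = 1 := by
    have e1 : M (a * fz + b * (h - X)) = M a * Fm + M b * (M h - X) := by
      unfold Fm M
      simp only [Polynomial.map_add, Polynomial.map_mul, Polynomial.map_sub, Polynomial.map_X]
    have e2 : M (1 : ℤ[X]) = 1 := by unfold M; simp
    rw [e1, e2] at h1; exact h1
  have hc : IsCoprime Fm (M h - X) := ⟨M a, M b, h2⟩
  obtain ⟨s, hs⟩ := hdvd
  have hrw : (X : (R5)[X]) ^ (5 ^ d) - X = (M h - X) + Fm * s := by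
    rw [← hs]; ring
  rw [hrw]
  exact hc.add_mul_left_right s

private lemma cop1 : IsCoprime Fm ((X : (R5)[X]) ^ (5 ^ 1) - X) := cop_aux bezZ1 dvd1
private lemma cop2 : IsCoprime Fm ((X : (R5)[X]) ^ (5 ^ 2) - X) := cop_aux bezZ2 dvd2
private lemma cop3 : IsCoprime Fm ((X : (R5)[X]) ^ (5 ^ 3) - X) := cop_aux bezZ3 dvd3
private lemma cop4 : IsCoprime Fm ((X : (R5)[X]) ^ (5 ^ 4) - X) := cop_aux bezZ4 dvd4
private lemma cop5 : IsCoprime Fm ((X : (R5)[X]) ^ (5 ^ 5) - X) := cop_aux bezZ5 dvd5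
private lemma cop6 : IsCoprime Fm ((X : (R5)[X]) ^ (5 ^ 6) - X) := cop_aux bezZ6 dvd6

/-- Any irreducible polynomial of degree `d` over a finite field `K` divides
`X ^ (|K| ^ d) - X`. -/
private lemma irr_dvd_X_pow_card {K : Type} [Field K] [Fintype K] {π : K[X]}
    (hπ : Irreducible π) : π ∣ X ^ (Fintype.card K ^ π.natDegree) - X := by
  haveI := Fact.mk hπ
  have hne : π ≠ 0 := hπ.ne_zero
  haveI : Fintype (AdjoinRoot π) :=
    Module.fintypeOfFintype (AdjoinRoot.powerBasis hne).basis
  have hcard : Fintype.card (AdjoinRoot π) = Fintype.card K ^ π.natDegree := by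
    rw [Module.card_fintype (AdjoinRoot.powerBasis hne).basis, Fintype.card_fin]
    rfl
  have hz : (AdjoinRoot.mk π) (X ^ (Fintype.card K ^ π.natDegree) - X) = 0 := by
    rw [map_sub, map_pow, AdjoinRoot.mk_X, ← hcard, FiniteField.pow_card, sub_self]
  exact AdjoinRoot.mk_eq_zero.mp hz

private lemma fz_monic : fz.Monic := by
  unfold fz; monicity!

private lemma Fm_monic : Fm.Monic := fz_monic.map phi

private lemma Fm_natDegree : Fm.natDegree = 13 := by
  have h13 : fz.natDegree = 13 := by unfold fz; compute_degree!
  unfold Fm M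
  rw [fz_monic.natDegree_map, h13]

private lemma Fm_irreducible : Irreducible Fm := by
  have hF0 : Fm ≠ 0 := Fm_monic.ne_zero
  have hcop : ∀ d : ℕ, 1 ≤ d → d ≤ 6 →
      IsCoprime Fm ((X : (R5)[X]) ^ (5 ^ d) - X) := by
    intro d h1 h6
    interval_cases d
    · exact cop1
    · exact cop2
    · exact cop3
    · exact cop4
    · exact cop5
    · exact cop6
  constructor
  · exact not_isUnit_of_natDegree_pos Fm (by rw [Fm_natDegree]; norm_num)
  · intro g h hgh
    by_contra hcon
    push_neg at hcon
    obtain ⟨hg, hh⟩ := hcon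
    have hg0 : g ≠ 0 := by rintro rfl; rw [zero_mul] at hgh; exact hF0 hgh
    have hh0 : h ≠ 0 := by rintro rfl; rw [mul_zero] at hgh; exact hF0 hgh
    have hsum : g.natDegree + h.natDegree = 13 := by
      rw [← Fm_natDegree, hgh, Polynomial.natDegree_mul hg0 hh0]
    have key : ∀ u : (R5)[X], u ≠ 0 → ¬ IsUnit u → u ∣ Fm → u.natDegree ≤ 6 → False := by
      intro u hu0 huu hud hule
      obtain ⟨π, hπ, hπd⟩ := WfDvdMonoid.exists_irreducible_factor huu hu0
      have hπF : π ∣ Fm := hπd.trans hud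
      have hπle : π.natDegree ≤ 6 :=
        le_trans (Polynomial.natDegree_le_of_dvd hπd hu0) hule
      have hπpos : 1 ≤ π.natDegree := hπ.natDegree_pos
      have hπdvd : π ∣ (X : (R5)[X]) ^ (5 ^ π.natDegree) - X := by
        have := irr_dvd_X_pow_card hπ
        rwa [ZMod.card] at this
      exact hπ.not_isUnit ((hcop π.natDegree hπpos hπle).isUnit_of_dvd' hπF hπdvd)
    rcases le_or_gt g.natDegree 6 with h6 | h6
    · exact key g hg0 hg ⟨h, hgh⟩ h6
    · exact key h hh0 hh ⟨g, by rw [hgh, mul_comm]⟩ (by omega)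

private lemma fz_irreducible : Irreducible fz :=
  fz_monic.irreducible_of_irreducible_map phi fz Fm_irreducible

end PSL33Aux

/-- The degree-13 `PSL₃(3)`-polynomial of Section 9, whose splitting field is
ramified only at `p = 83420911386433`, is irreducible over `ℚ`. -/
theorem psl33_poly_irreducible :
    Irreducible (X ^ 13 - 6 * X ^ 12 - 4542 * X ^ 11 - 226075 * X ^ 10
      + 8156061 * X ^ 9 + 770464590 * X ^ 8 + 11462215447 * X ^ 7
      - 970419905164 * X ^ 6 - 33706100049495 * X ^ 5 + 18705429494567 * X ^ 4
      + 29408002566579439 * X ^ 3 + 237585722590314749 * X ^ 2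
      - 2291157493210202812 * X - 11381632704121436976 : ℚ[X]) := by
  have h2 := (Polynomial.IsPrimitive.Int.irreducible_iff_irreducible_map_cast
    fz_monic.isPrimitive).mp fz_irreducible
  have h3 : fz.map (Int.castRingHom ℚ)
      = (X ^ 13 - 6 * X ^ 12 - 4542 * X ^ 11 - 226075 * X ^ 10
      + 8156061 * X ^ 9 + 770464590 * X ^ 8 + 11462215447 * X ^ 7
      - 970419905164 * X ^ 6 - 33706100049495 * X ^ 5 + 18705429494567 * X ^ 4
      + 29408002566579439 * X ^ 3 + 237585722590314749 * X ^ 2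
      - 2291157493210202812 * X - 11381632704121436976 : ℚ[X]) := by
    unfold fz
    simp only [Polynomial.map_add, Polynomial.map_mul, Polynomial.map_sub,
      Polynomial.map_neg, Polynomial.map_pow, Polynomial.map_X,
      Polynomial.map_ofNat, Polynomial.map_one]
    ring
  rwa [h3] at h2
end
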